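/- Let Γ₁ and Γ₂ be two distinct connected components of Γ, with a ∈ Γ₁ and b ∈ Γ₂, and suppose st(b) ≠ Γ₂, with D a component of Γ₂ − st(b). Then the partial conjugations P_a^{Γ₂} and P_b^D commute in Aut(A_Γ). -/

import Mathlib

/-- The relations of a right-angled Artin group: commutators of adjacent vertices. -/
def raagRels {V : Type*} (G : SimpleGraph V) : Set (FreeGroup V) :=
  {r | ∃ u v : V, G.Adj u v ∧
    r = FreeGroup.of u * FreeGroup.of v * (FreeGroup.of u)⁻¹ * (FreeGroup.of v)⁻¹}

/-- The right-angled Artin group of a simplicial graph `G`. -/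
abbrev RAAG {V : Type*} (G : SimpleGraph V) := PresentedGroup (raagRels G)

/-- The generator of `RAAG G` corresponding to a vertex. -/
def gen {V : Type*} (G : SimpleGraph V) (v : V) : RAAG G := PresentedGroup.of v

/-- The star of a vertex: the vertex together with its neighbours. -/
def star {V : Type*} (G : SimpleGraph V) (v : V) : Set V := insert v (G.neighborSet v)

/-- `a ≤ b` : the link of `a` is contained in the star of `b`. -/
def LkLeSt {V : Type*} (G : SimpleGraph V) (a b : V) : Prop := G.neighborSet a ⊆ star G b

/-- The complement of the star of `v`. -/
def stComp {V : Type*} (G : SimpleGraph V) (v : V) : Set V := (star G v)ᶜ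

/-- `C` is (the vertex set of) a connected component of `Γ − st(v)`. -/
def IsCompOf {V : Type*} (G : SimpleGraph V) (v : V) (C : Set V) : Prop :=
  ∃ c : (G.induce (stComp G v)).ConnectedComponent, C = Subtype.val '' c.supp

/-- `C` is (the vertex set of) a connected component of `Γ`. -/
def IsGraphComp {V : Type*} (G : SimpleGraph V) (C : Set V) : Prop :=
  ∃ c : G.ConnectedComponent, C = c.supp

/-- `φ` is the right transvection `R_{ab} : a ↦ ab`, fixing all other generators. -/
def IsRT {V : Type*} {G : SimpleGraph V} (φ : MulAut (RAAG G)) (a b : V) : Prop :=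
  φ (gen G a) = gen G a * gen G b ∧ ∀ w ≠ a, φ (gen G w) = gen G w

/-- `φ` is the left transvection `L_{ab} : a ↦ ba`, fixing all other generators. -/
def IsLT {V : Type*} {G : SimpleGraph V} (φ : MulAut (RAAG G)) (a b : V) : Prop :=
  φ (gen G a) = gen G b * gen G a ∧ ∀ w ≠ a, φ (gen G w) = gen G w

/-- `φ` is the partial conjugation `P_v^C`, conjugating every vertex of `C` by `v`
and fixing all other generators. -/
def IsPC {V : Type*} {G : SimpleGraph V} (φ : MulAut (RAAG G)) (v : V) (C : Set V) : Prop :=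
  (∀ w ∈ C, φ (gen G w) = gen G v * gen G w * (gen G v)⁻¹) ∧
  ∀ w ∉ C, φ (gen G w) = gen G w

/-!
On a generator `w` both composites agree: outside `C` both fix `w`, on `C \ D` both conjugate
by `a` (as `Q` fixes `a`), and on `D` both give `a b w b⁻¹ a⁻¹`, because `P` conjugates `b ∈ C`
by `a` while `Q` fixes `a ∉ D`.
-/

section

variable {V : Type*} {G : SimpleGraph V}

theorem RAAG.mulAut_ext {φ ψ : MulAut (RAAG G)} (h : ∀ v, φ (gen G v) = ψ (gen G v)) :
    φ = ψ :=
  MulEquiv.toMonoidHom_injective (PresentedGroup.ext h)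

theorem IsPC.commute {P Q : MulAut (RAAG G)} {a b : V} {C D : Set V}
    (hP : IsPC P a C) (hQ : IsPC Q b D) (hDC : D ⊆ C) (hbC : b ∈ C) (haD : a ∉ D) :
    Commute P Q := by
  refine RAAG.mulAut_ext fun w => ?_
  simp only [MulAut.mul_apply]
  by_cases hwD : w ∈ D
  · simp only [hQ.1 w hwD, hP.1 w (hDC hwD), map_mul, map_inv, hP.1 b hbC, hQ.2 a haD]
    group
  by_cases hwC : w ∈ C
  · simp only [hQ.2 w hwD, hP.1 w hwC, map_mul, map_inv, hQ.2 a haD]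
  · simp only [hQ.2 w hwD, hP.2 w hwC]

theorem IsGraphComp.notMem_of_ne {Γ₁ Γ₂ : Set V} (hΓ₁ : IsGraphComp G Γ₁)
    (hΓ₂ : IsGraphComp G Γ₂) (hne : Γ₁ ≠ Γ₂) {v : V} (hv₁ : v ∈ Γ₁) : v ∉ Γ₂ := by
  obtain ⟨c₁, rfl⟩ := hΓ₁
  obtain ⟨c₂, rfl⟩ := hΓ₂
  intro hv₂
  rw [SimpleGraph.ConnectedComponent.mem_supp_iff] at hv₁ hv₂
  exact hne (congrArg _ (hv₁.symm.trans hv₂))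

end

theorem statement12_general {V : Type*} (G : SimpleGraph V)
    (Γ₁ Γ₂ : Set V) (hΓ₁ : IsGraphComp G Γ₁) (hΓ₂ : IsGraphComp G Γ₂) (hne : Γ₁ ≠ Γ₂)
    (a b : V) (ha : a ∈ Γ₁) (hb : b ∈ Γ₂)
    (D : Set V) (hDsub : D ⊆ Γ₂)
    (P Q : MulAut (RAAG G)) (hP : IsPC P a Γ₂) (hQ : IsPC Q b D) :
    P * Q = Q * P :=
  have haΓ₂ : a ∉ Γ₂ := hΓ₁.notMem_of_ne hΓ₂ hne ha
  (hP.commute hQ hDsub hb fun haD => haΓ₂ (hDsub haD)).eq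

/-- if `Γ₁`, `Γ₂` are distinct connected components of `Γ`, `a ∈ Γ₁`,
`b ∈ Γ₂`, `st(b) ≠ Γ₂`, and `D` is a component of `Γ₂ − st(b)`, then `P_a^{Γ₂}` and
`P_b^D` commute in `Aut(A_Γ)`. -/
theorem statement12 {V : Type*} [Fintype V] [DecidableEq V] (G : SimpleGraph V)
    (Γ₁ Γ₂ : Set V) (hΓ₁ : IsGraphComp G Γ₁) (hΓ₂ : IsGraphComp G Γ₂) (hne : Γ₁ ≠ Γ₂)
    (a b : V) (ha : a ∈ Γ₁) (hb : b ∈ Γ₂) (hstb : star G b ≠ Γ₂)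
    (D : Set V) (hD : IsCompOf G b D) (hDsub : D ⊆ Γ₂)
    (P Q : MulAut (RAAG G)) (hP : IsPC P a Γ₂) (hQ : IsPC Q b D) :
    P * Q = Q * P :=
  statement12_general G Γ₁ Γ₂ hΓ₁ hΓ₂ hne a b ha hb D hDsub P Q hP hQ
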